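/- Let I ⊆ [0, ∞) be a measurable set with finite Lebesgue measure |I|. Then for every natural number n, (1/n!) ∫_I s^n e^{−s} ds ≤ 1 − e^{−|I|}. -/

import Mathlib

/-!
Substitute `u = Λ(s) := -log S(s)`, where `S(s) = e^{-s} ∑_{k ≤ n} s^k / k!` is the survival
function of the Erlang law with density `g(s) = s^n e^{-s} / n!`. Since `S' = -g`, we have
`Λ' = g / S`, so `g(s) ds = Λ'(s) e^{-Λ(s)} ds = e^{-u} du`. The hazard rate `g / S` lies in
`[0, 1]` (`g` is one of the terms of `S`), so `Λ` is monotone and 1-Lipschitz with `Λ(0) = 0`, and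
`Λ(I) ⊆ [0, ∞)` has measure at most `|I|`. Finally, by the bathtub principle,
`∫_J e^{-u} du ≤ ∫_0^{|J|} e^{-u} du = 1 - e^{-|J|}` for every `J ⊆ [0, ∞)` of finite measure.
-/

open MeasureTheory Real Set

section Bathtub

variable {α : Type*} [MeasurableSpace α] {μ : Measure α}

theorem setIntegral_le_setIntegral_of_measure_eq {s t : Set α} {f : α → ℝ} (c : ℝ)
    (hs : MeasurableSet s) (ht : MeasurableSet t) (hμ : μ s = μ t) (hμs : μ s ≠ ⊤)
    (hfs : IntegrableOn f s μ) (hft : IntegrableOn f t μ)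
    (hle : ∀ x ∈ s \ t, f x ≤ c) (hge : ∀ x ∈ t \ s, c ≤ f x) :
    ∫ x in s, f x ∂μ ≤ ∫ x in t, f x ∂μ := by
  have hμst : μ (s \ t) ≠ ⊤ := measure_ne_top_of_subset sdiff_subset hμs
  have hμts : μ (t \ s) ≠ ⊤ := measure_ne_top_of_subset sdiff_subset (hμ ▸ hμs)
  have hdiff : μ.real (s \ t) = μ.real (t \ s) := by
    rw [measureReal_def, measureReal_def, measure_sdiff_symm hs.nullMeasurableSet
      ht.nullMeasurableSet hμ (measure_ne_top_of_subset inter_subset_left hμs)]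
  rw [← integral_inter_add_sdiff ht hfs, ← integral_inter_add_sdiff hs hft, inter_comm]
  refine add_le_add_right ?_ _
  calc ∫ x in s \ t, f x ∂μ
      ≤ ∫ _ in s \ t, c ∂μ :=
        setIntegral_mono_on (hfs.mono_set sdiff_subset) (integrableOn_const hμst)
          (hs.diff ht) hle
    _ = ∫ _ in t \ s, c ∂μ := by rw [setIntegral_const, setIntegral_const, hdiff]
    _ ≤ ∫ x in t \ s, f x ∂μ :=
        setIntegral_mono_on (integrableOn_const hμts) (hft.mono_set sdiff_subset)
          (ht.diff hs) hge

end Bathtub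

theorem integral_Icc_exp_neg {m : ℝ} (hm : 0 ≤ m) :
    ∫ u in Icc 0 m, exp (-u) = 1 - exp (-m) := by
  rw [integral_Icc_eq_integral_Ioc, ← intervalIntegral.integral_of_le hm,
    intervalIntegral.integral_comp_neg (fun x => exp x), integral_exp]
  simp

theorem integrableOn_exp_neg_Ici (c : ℝ) : IntegrableOn (fun u : ℝ => exp (-u)) (Ici c) :=
  (integrableOn_Ici_iff_integrableOn_Ioi).mpr (integrableOn_exp_neg_Ioi c)

-- Among subsets of `[0, ∞)` of measure `m`, `[0, m]` maximises `∫ e^{-u}`.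
theorem setIntegral_exp_neg_le {J : Set ℝ} (hJ : MeasurableSet J) (hJsub : J ⊆ Ici 0)
    (hJfin : volume J ≠ ⊤) :
    ∫ u in J, exp (-u) ≤ 1 - exp (-(volume J).toReal) := by
  set m := (volume J).toReal
  have hm : 0 ≤ m := ENNReal.toReal_nonneg
  rw [← integral_Icc_exp_neg hm]
  refine setIntegral_le_setIntegral_of_measure_eq (exp (-m)) hJ measurableSet_Icc ?_ hJfin
    ((integrableOn_exp_neg_Ici 0).mono_set hJsub)
    ((integrableOn_exp_neg_Ici 0).mono_set Icc_subset_Ici_self) ?_ ?_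
  · rw [Real.volume_Icc, sub_zero, ENNReal.ofReal_toReal hJfin]
  · intro u ⟨huJ, hu⟩
    have : m < u := by
      by_contra! h
      exact hu ⟨hJsub huJ, h⟩
    exact exp_le_exp.mpr (by linarith)
  · intro u ⟨hu, _⟩
    exact exp_le_exp.mpr (by linarith [hu.2])

theorem setIntegral_deriv_mul_exp_neg_le {F F' : ℝ → ℝ} {I : Set ℝ} (hI : MeasurableSet I)
    (hIsub : I ⊆ Ici 0) (hIfin : volume I ≠ ⊤)
    (hF : ∀ s ∈ Ici (0 : ℝ), HasDerivAt F (F' s) s) (hF' : ∀ s ∈ Ici (0 : ℝ), F' s ∈ Icc 0 1)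
    (hF0 : 0 ≤ F 0) :
    ∫ s in I, F' s * exp (-F s) ≤ 1 - exp (-(volume I).toReal) := by
  have hmono : MonotoneOn F (Ici 0) :=
    monotoneOn_of_hasDerivWithinAt_nonneg (convex_Ici 0)
      (fun s hs => (hF s hs).continuousAt.continuousWithinAt)
      (fun s hs => (hF s (interior_subset hs)).hasDerivWithinAt)
      (fun s hs => (hF' s (interior_subset hs)).1)
  have hmonoI := hmono.mono hIsub
  have hderivI : ∀ s ∈ I, HasDerivWithinAt F (F' s) I s :=
    fun s hs => (hF s (hIsub hs)).hasDerivWithinAt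
  have hJsub : F '' I ⊆ Ici 0 := by
    rintro _ ⟨s, hs, rfl⟩
    exact hF0.trans (hmono self_mem_Ici (hIsub hs) (hIsub hs))
  have hvol : volume (F '' I) ≤ volume I :=
    calc volume (F '' I)
        = ∫⁻ s in I, ENNReal.ofReal (F' s) :=
          (lintegral_deriv_eq_volume_image_of_monotoneOn hI hderivI hmonoI).symm
      _ ≤ ∫⁻ _ in I, 1 :=
          setLIntegral_mono' hI fun s hs => ENNReal.ofReal_le_one.mpr (hF' s (hIsub hs)).2
      _ = volume I := setLIntegral_one I
  calc ∫ s in I, F' s * exp (-F s)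
      = ∫ u in F '' I, exp (-u) :=
        (integral_image_eq_integral_deriv_smul_of_monotoneOn hI hderivI hmonoI
          fun u => exp (-u)).symm
    _ ≤ 1 - exp (-(volume (F '' I)).toReal) :=
        setIntegral_exp_neg_le (hI.image_of_monotoneOn hmonoI) hJsub
          (ne_top_of_le_ne_top hIfin hvol)
    _ ≤ 1 - exp (-(volume I).toReal) := by gcongr

noncomputable def erlangDensity (n : ℕ) (s : ℝ) : ℝ := s ^ n * exp (-s) / n.factorial

-- `erlangSurvival n s = P(Γ(n+1, 1) > s) = P(Poisson(s) ≤ n)`.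
noncomputable def erlangSurvival (n : ℕ) (s : ℝ) : ℝ :=
  ∑ k ∈ Finset.range (n + 1), erlangDensity k s

theorem hasDerivAt_exp_neg (s : ℝ) : HasDerivAt (fun s => exp (-s)) (-exp (-s)) s := by
  simpa using (hasDerivAt_neg s).exp

theorem erlangDensity_zero : erlangDensity 0 = fun s => exp (-s) := by
  ext s
  simp [erlangDensity]

theorem hasDerivAt_erlangDensity_succ (n : ℕ) (s : ℝ) :
    HasDerivAt (erlangDensity (n + 1)) (erlangDensity n s - erlangDensity (n + 1) s) s := by
  have h := ((hasDerivAt_pow (n + 1) s).fun_mul (hasDerivAt_exp_neg s)).div_const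
    ((n + 1).factorial : ℝ)
  refine h.congr_deriv ?_
  simp only [erlangDensity, Nat.factorial_succ, Nat.cast_mul, Nat.add_sub_cancel]
  field_simp
  ring

theorem erlangSurvival_succ (n : ℕ) :
    erlangSurvival (n + 1) = erlangSurvival n + erlangDensity (n + 1) := by
  ext s
  exact Finset.sum_range_succ _ (n + 1)

theorem hasDerivAt_erlangSurvival (n : ℕ) (s : ℝ) :
    HasDerivAt (erlangSurvival n) (-erlangDensity n s) s := by
  induction n with
  | zero =>
    rw [show erlangSurvival 0 = erlangDensity 0 from funext fun t => Finset.sum_range_one _,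
      erlangDensity_zero]
    exact hasDerivAt_exp_neg s
  | succ n ih =>
    rw [erlangSurvival_succ]
    exact (ih.add (hasDerivAt_erlangDensity_succ n s)).congr_deriv (by ring)

theorem erlangDensity_nonneg (n : ℕ) {s : ℝ} (hs : 0 ≤ s) : 0 ≤ erlangDensity n s := by
  unfold erlangDensity
  positivity

theorem erlangDensity_le_erlangSurvival (n : ℕ) {s : ℝ} (hs : 0 ≤ s) :
    erlangDensity n s ≤ erlangSurvival n s :=
  Finset.single_le_sum (fun k _ => erlangDensity_nonneg k hs) (Finset.self_mem_range_succ n)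

theorem erlangSurvival_pos (n : ℕ) {s : ℝ} (hs : 0 ≤ s) : 0 < erlangSurvival n s := by
  refine (Finset.sum_pos' (fun k _ => erlangDensity_nonneg k hs) ⟨0, by simp, ?_⟩)
  simpa [erlangDensity] using exp_pos (-s)

theorem erlangSurvival_zero (n : ℕ) : erlangSurvival n 0 = 1 := by
  simp [erlangSurvival, erlangDensity, Finset.sum_range_succ', zero_pow_eq]

theorem hasDerivAt_neg_log_erlangSurvival (n : ℕ) {s : ℝ} (hs : 0 ≤ s) :
    HasDerivAt (fun t => -log (erlangSurvival n t))
      (erlangDensity n s / erlangSurvival n s) s := by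
  simpa [neg_div] using
    ((hasDerivAt_erlangSurvival n s).log (erlangSurvival_pos n hs).ne').fun_neg

theorem integral_pow_exp_le_of_finite_measure
    (I : Set ℝ) (hImeas : MeasurableSet I) (hIsub : I ⊆ Set.Ici 0)
    (hIfin : volume I ≠ ⊤) (n : ℕ) :
    (1 / (n.factorial : ℝ)) * ∫ s in I, s ^ n * Real.exp (-s)
      ≤ 1 - Real.exp (-(volume I).toReal) := by
  have hazard_mem (s : ℝ) (hs : s ∈ Ici (0 : ℝ)) :
      erlangDensity n s / erlangSurvival n s ∈ Icc 0 1 :=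
    ⟨div_nonneg (erlangDensity_nonneg n hs) (erlangSurvival_pos n hs).le,
      div_le_one_of_le₀ (erlangDensity_le_erlangSurvival n hs) (erlangSurvival_pos n hs).le⟩
  calc (1 / (n.factorial : ℝ)) * ∫ s in I, s ^ n * exp (-s)
      = ∫ s in I, erlangDensity n s := by
        rw [← integral_const_mul]
        simp only [erlangDensity, one_div_mul_eq_div]
    _ = ∫ s in I, erlangDensity n s / erlangSurvival n s * exp (-(-log (erlangSurvival n s))) :=
        setIntegral_congr_fun hImeas fun s hs => by
          rw [neg_neg, exp_log (erlangSurvival_pos n (hIsub hs)),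
            div_mul_cancel₀ _ (erlangSurvival_pos n (hIsub hs)).ne']
    _ ≤ 1 - exp (-(volume I).toReal) :=
        setIntegral_deriv_mul_exp_neg_le hImeas hIsub hIfin
          (fun s hs => hasDerivAt_neg_log_erlangSurvival n hs) hazard_mem
          (by simp [erlangSurvival_zero])
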